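/- For every octonion q, every z ∈ ℝ and a ∈ 𝕆, one has [X_q, P(z,a)] = P(2⟨q,a⟩, −2zq). Consequently ad_{X_q} maps V into V and is skew-adjoint with respect to the quadratic form P(z,a) ↦ z² + N(a); moreover, if q is imaginary with N(q) = 1, then ad_{X_q} annihilates every P(0,a) with ⟨a,q⟩ = 0 and sends P(0,q) ↦ 2·P(1,0) and P(1,0) ↦ −2·P(0,q), i.e. it is an infinitesimal rotation in the (q,z)-plane. -/

import Mathlib

/-!
Multiplying out the 2×2 matrices, the off-diagonal entries of `[X_q, P(z,a)]` only involve
products with the real scalar `z` and give `−2zq` and its conjugate, while the diagonal entries are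
`q·conj a + a·conj q` and `−(conj q·a + conj a·q)`. Although `𝕆` is not associative,
both symmetrised products equal the real scalar `2⟨q,a⟩`, as a componentwise computation
in `ℍ × ℍ` shows. The remaining claims are linear algebra in `(z,a)`: skew-adjointness is
the symmetry of `⟨·,·⟩`, and the rotation formulas specialise the commutator formula.
-/

noncomputable section

abbrev H := Quaternion ℝ

/-- The octonions 𝕆, as the Cayley–Dickson double of the quaternions:
pairs (a,b) of quaternions. -/
def Oct : Type := H × H

namespace Oct

instance : AddCommGroup Oct := inferInstanceAs (AddCommGroup (H × H))
instance : Module ℝ Oct := inferInstanceAs (Module ℝ (H × H))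

def mk' (a b : H) : Oct := (a, b)
def fst : Oct → H := Prod.fst
def snd : Oct → H := Prod.snd

/-- Cayley–Dickson multiplication: (a,b)·(c,d) = (ac − conj(d)b, da + b·conj(c)). -/
instance : Mul Oct :=
  ⟨fun p q => mk' (p.fst * q.fst - star q.snd * p.snd) (q.snd * p.fst + p.snd * star q.fst)⟩

instance : One Oct := ⟨mk' 1 0⟩

/-- Octonionic conjugation: conj (a,b) = (conj a, −b). -/
def conj (p : Oct) : Oct := mk' (star p.fst) (-p.snd)

/-- The real part of an octonion, as a real scalar. -/
def re (p : Oct) : ℝ := (p.fst).re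

/-- The bilinear form ⟨x,y⟩ = (x·conj(y) + y·conj(x))/2, a real scalar. -/
def oinner (p q : Oct) : ℝ := re (p * conj q + q * conj p) / 2

/-- The norm N(x) = x·conj(x), a real scalar. -/
def N (p : Oct) : ℝ := re (p * conj p)

/-- An octonion is imaginary if conj x = −x. -/
def IsIm (p : Oct) : Prop := conj p = -p

/-- The embedding of the reals into the octonions. -/
def oR (r : ℝ) : Oct := mk' (algebraMap ℝ H r) 0

end Oct

open Oct

abbrev M2 := Matrix (Fin 2) (Fin 2) Oct

/-- The traceless Hermitian 2×2 matrix P(z,a) = !![z, a; conj a, −z]. -/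
def Pm (z : ℝ) (a : Oct) : M2 := !![oR z, a; conj a, -oR z]

/-- The off-diagonal anti-Hermitian generator X_q = !![0, q; −conj q, 0]. -/
def Xm (q : Oct) : M2 := !![0, q; -conj q, 0]

/-- The diagonal generator D_q = !![q, 0; 0, −q]. -/
def Dm (q : Oct) : M2 := !![q, 0; 0, -q]

/-- The adjoint action ad_A : P ↦ AP − PA (entrywise octonion multiplication). -/
def ad (A : M2) : M2 → M2 := fun P => A * P - P * A

/-- The bracket of operators, [S,T] = S∘T − T∘S. -/
def br (S T : M2 → M2) : M2 → M2 := fun P => S (T P) - T (S P)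

namespace Oct

@[ext] lemma ext {p q : Oct} (h1 : p.fst = q.fst) (h2 : p.snd = q.snd) : p = q :=
  Prod.ext h1 h2

@[simp] lemma mul_fst (p q : Oct) : (p * q).fst = p.fst * q.fst - star q.snd * p.snd := rfl
@[simp] lemma mul_snd (p q : Oct) : (p * q).snd = q.snd * p.fst + p.snd * star q.fst := rfl
@[simp] lemma add_fst (p q : Oct) : (p + q).fst = p.fst + q.fst := rfl
@[simp] lemma add_snd (p q : Oct) : (p + q).snd = p.snd + q.snd := rfl
@[simp] lemma neg_fst (p : Oct) : (-p).fst = -p.fst := rfl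
@[simp] lemma neg_snd (p : Oct) : (-p).snd = -p.snd := rfl
@[simp] lemma smul_fst (r : ℝ) (p : Oct) : (r • p).fst = r • p.fst := rfl
@[simp] lemma smul_snd (r : ℝ) (p : Oct) : (r • p).snd = r • p.snd := rfl
@[simp] lemma zero_fst : (0 : Oct).fst = 0 := rfl
@[simp] lemma zero_snd : (0 : Oct).snd = 0 := rfl
@[simp] lemma conj_fst (p : Oct) : (conj p).fst = star p.fst := rfl
@[simp] lemma conj_snd (p : Oct) : (conj p).snd = -p.snd := rfl
@[simp] lemma oR_fst (r : ℝ) : (oR r).fst = algebraMap ℝ H r := rfl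
@[simp] lemma oR_snd (r : ℝ) : (oR r).snd = 0 := rfl

@[simp] lemma zero_mul (p : Oct) : 0 * p = 0 := by ext <;> simp
@[simp] lemma mul_zero (p : Oct) : p * 0 = 0 := by ext <;> simp
@[simp] lemma neg_mul (p q : Oct) : -p * q = -(p * q) := by ext <;> simp <;> abel
@[simp] lemma mul_neg (p q : Oct) : p * -q = -(p * q) := by ext <;> simp <;> abel

instance : IsScalarTower ℝ Oct Oct := ⟨fun r p q => by ext <;> simp <;> ring⟩
instance : SMulCommClass ℝ Oct Oct := ⟨fun r p q => by ext <;> simp <;> ring⟩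

@[simp] lemma conj_zero : conj 0 = 0 := by ext <;> simp
@[simp] lemma conj_neg (p : Oct) : conj (-p) = -conj p := by ext <;> simp
@[simp] lemma conj_smul (r : ℝ) (p : Oct) : conj (r • p) = r • conj p := by ext <;> simp

@[simp] lemma re_smul (r : ℝ) (p : Oct) : re (r • p) = r * re p := by simp [re]

@[simp] lemma oR_zero : oR 0 = 0 := by ext <;> simp

lemma oR_mul (r s : ℝ) : oR (r * s) = r • oR s := by ext <;> simp [Algebra.smul_def]

lemma oR_injective : Function.Injective oR := fun r s h => by
  simpa using congrArg (fun p : Oct => p.fst.re) h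

@[simp] lemma oR_mul_eq_smul (r : ℝ) (p : Oct) : oR r * p = r • p := by
  ext : 1 <;>
    simp [Quaternion.algebraMap_def, Quaternion.coe_mul_eq_smul, Quaternion.mul_coe_eq_smul]

@[simp] lemma mul_oR_eq_smul (p : Oct) (r : ℝ) : p * oR r = r • p := by
  ext : 1 <;> simp [Quaternion.algebraMap_def, Quaternion.mul_coe_eq_smul]

lemma two_mul_oinner (p q : Oct) : 2 * oinner p q = re (p * conj q + q * conj p) := by
  rw [oinner]; ring

lemma mul_conj_add_mul_conj (p q : Oct) : p * conj q + q * conj p = oR (2 * oinner p q) := by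
  rw [two_mul_oinner]
  ext <;> simp [re, Quaternion.algebraMap_def] <;> ring

lemma conj_mul_add_conj_mul (p q : Oct) : conj p * q + conj q * p = oR (2 * oinner p q) := by
  rw [two_mul_oinner]
  ext <;> simp [re, Quaternion.algebraMap_def] <;> ring

lemma oinner_comm (p q : Oct) : oinner p q = oinner q p := by
  rw [oinner, oinner, add_comm]

lemma oinner_smul_left (r : ℝ) (p q : Oct) : oinner (r • p) q = r * oinner p q := by
  rw [oinner, oinner, conj_smul, smul_mul_assoc, mul_smul_comm, ← smul_add, re_smul,
    mul_div_assoc]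

lemma oinner_zero_right (p : Oct) : oinner p 0 = 0 := by
  rw [oinner_comm, ← zero_smul ℝ p, oinner_smul_left, MulZeroClass.zero_mul]

lemma oinner_self (p : Oct) : oinner p p = N p := by
  rw [oinner, N, re, re, add_fst, Quaternion.re_add]; ring

end Oct

@[simp] lemma Pm_zero : Pm 0 0 = 0 := by
  ext i j : 1; fin_cases i <;> fin_cases j <;> simp [Pm]

lemma smul_Pm (r z : ℝ) (a : Oct) : r • Pm z a = Pm (r * z) (r • a) := by
  simp [Pm, Matrix.smul_of, oR_mul]

lemma Pm_inj {z z' : ℝ} {a a' : Oct} : Pm z a = Pm z' a' ↔ z = z' ∧ a = a' := by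
  refine ⟨fun h => ⟨oR_injective ?_, ?_⟩, fun ⟨hz, ha⟩ => hz ▸ ha ▸ rfl⟩
  · simpa [Pm] using congrFun (congrFun h 0) 0
  · simpa [Pm] using congrFun (congrFun h 0) 1

lemma ad_Xm_Pm (q : Oct) (z : ℝ) (a : Oct) :
    ad (Xm q) (Pm z a) = Pm (2 * oinner q a) ((-(2 * z)) • q) := by
  rw [ad, Xm, Pm, Pm, Matrix.mul_fin_two, Matrix.mul_fin_two]
  ext i j : 1
  fin_cases i <;> fin_cases j <;>
    simp only [Fin.zero_eta, Fin.mk_one, Fin.isValue, Matrix.sub_apply, Matrix.of_apply,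
      Matrix.cons_val', Matrix.cons_val_zero, Matrix.cons_val_one, Matrix.cons_val_fin_one,
      Oct.zero_mul, Oct.mul_zero, Oct.mul_neg, Oct.neg_mul, mul_oR_eq_smul, oR_mul_eq_smul,
      conj_neg, conj_smul, zero_add, add_zero, sub_neg_eq_add, smul_zero, smul_neg, neg_smul,
      neg_zero, neg_neg]
  · exact mul_conj_add_mul_conj q a
  · module
  · module
  · rw [← conj_mul_add_conj_mul]; abel

/-- For every octonion q and every z ∈ ℝ, a ∈ 𝕆: [X_q, P(z,a)] = P(2⟨q,a⟩, −2zq).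
Consequently ad_{X_q} maps V into V and is skew-adjoint with respect to the
quadratic form P(z,a) ↦ z² + N(a) (whose polar form is (z,a),(z',a') ↦ zz' + ⟨a,a'⟩);
moreover, if q is imaginary with N(q) = 1, then ad_{X_q} annihilates every P(0,a)
with ⟨a,q⟩ = 0 and sends P(0,q) ↦ 2·P(1,0) and P(1,0) ↦ −2·P(0,q),
i.e. it is an infinitesimal rotation in the (q,z)-plane. -/
theorem adX_on_V (q : Oct) :
    (∀ (z : ℝ) (a : Oct), ad (Xm q) (Pm z a) = Pm (2 * oinner q a) ((-(2 * z)) • q)) ∧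
    (∀ (z : ℝ) (a : Oct), ∃ (z' : ℝ) (a' : Oct), ad (Xm q) (Pm z a) = Pm z' a') ∧
    (∀ (z z' w w' : ℝ) (a a' b b' : Oct),
      ad (Xm q) (Pm z a) = Pm w b → ad (Xm q) (Pm z' a') = Pm w' b' →
      (w * z' + oinner b a') + (z * w' + oinner a b') = 0) ∧
    (IsIm q → N q = 1 →
      (∀ a : Oct, oinner a q = 0 → ad (Xm q) (Pm 0 a) = 0) ∧
      ad (Xm q) (Pm 0 q) = (2 : ℝ) • Pm 1 0 ∧
      ad (Xm q) (Pm 1 0) = (-2 : ℝ) • Pm 0 q) := by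
  refine ⟨ad_Xm_Pm q, fun z a => ⟨_, _, ad_Xm_Pm q z a⟩, ?_, fun _ hN => ⟨?_, ?_, ?_⟩⟩
  · intro z z' w w' a a' b b' h h'
    obtain ⟨rfl, rfl⟩ := Pm_inj.1 ((ad_Xm_Pm q z a).symm.trans h)
    obtain ⟨rfl, rfl⟩ := Pm_inj.1 ((ad_Xm_Pm q z' a').symm.trans h')
    rw [oinner_smul_left, oinner_comm a, oinner_smul_left]
    ring
  · intro a ha
    rw [ad_Xm_Pm, oinner_comm, ha]
    simp
  · rw [ad_Xm_Pm, oinner_self, hN, smul_Pm]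
    simp
  · rw [ad_Xm_Pm, oinner_zero_right, smul_Pm]
    simp
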